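/- For each n ≥ 1, the type B_n Jones–Wenzl projector b_{n,η,ε} (for η ∈ {+,-}) is the unique non-zero idempotent x in TL(B_n)_ε satisfying s₀x = ηx = xs₀ and U_ix = 0 = xU_i for all i = 1,…,n-1. -/

import Mathlib

/-! The type `B_n` Jones–Wenzl projector `b_{n,η,ε}` is the unique non-zero
idempotent `x` in `TL(B_n)_ε` satisfying `s₀x = ηx = xs₀` and
`U_ix = 0 = xU_i` for all `i = 1,…,n-1`. -/

noncomputable section

abbrev Kq : Type := RatFunc ℂ

def qq : Kq := RatFunc.X

/-- The quantum integer `[m] = (q^m - q^{-m})/(q - q⁻¹)` in `ℂ(q)`. -/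
def qint (m : ℤ) : Kq := (qq ^ m - qq ^ (-m)) / (qq - qq⁻¹)

/-- Generators of the type `B` Temperley–Lieb algebra: `none` is `s₀`, and
`some i` is the cup-cap generator `U_{i+1}`. -/
def g : Option ℕ → FreeAlgebra Kq (Option ℕ) := FreeAlgebra.ι Kq

/-- The defining relations of the (specialized) type `B` Temperley–Lieb
algebra (on infinitely many strands, so that `TL(B_n)` sits inside for
every `n`): `U_i² = -ε(q+q⁻¹)U_i`, distant commutativity,
`U_i U_{i±1} U_i = U_i`, `s₀² = 1`, `U₁ s₀ U₁ = 0` and `s₀ U_i = U_i s₀`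
for `i ≥ 2`.  (Recall `some i` stands for `U_{i+1}`.) -/
inductive TLBRel (ε : Kq) : FreeAlgebra Kq (Option ℕ) → FreeAlgebra Kq (Option ℕ) → Prop
  | Usq (i : ℕ) :
      TLBRel ε (g (some i) * g (some i)) ((-(ε * (qq + qq⁻¹))) • g (some i))
  | Ucomm (i j : ℕ) (h : i + 2 ≤ j) :
      TLBRel ε (g (some i) * g (some j)) (g (some j) * g (some i))
  | Ubraid1 (i : ℕ) :
      TLBRel ε (g (some i) * g (some (i+1)) * g (some i)) (g (some i))
  | Ubraid2 (i : ℕ) :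
      TLBRel ε (g (some (i+1)) * g (some i) * g (some (i+1))) (g (some (i+1)))
  | s0sq : TLBRel ε (g none * g none) 1
  | UsU : TLBRel ε (g (some 0) * g none * g (some 0)) 0
  | scomm (i : ℕ) (h : 1 ≤ i) :
      TLBRel ε (g none * g (some i)) (g (some i) * g none)

/-- The (specialized) type `B` Temperley–Lieb algebra `TL(B)_ε` (on
infinitely many strands). -/
abbrev TLB (ε : Kq) := RingQuot (TLBRel ε)

/-- The generator `s₀` of `TL(B)_ε`. -/
def s0 (ε : Kq) : TLB ε := RingQuot.mkAlgHom Kq (TLBRel ε) (g none)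

/-- The generator `U_i` of `TL(B)_ε`, for `i ≥ 1`. -/
def UU (ε : Kq) (i : ℕ) : TLB ε := RingQuot.mkAlgHom Kq (TLBRel ε) (g (some (i - 1)))

/-- The subalgebra `TL(B_n)_ε ⊆ TL(B)_ε`, generated by `s₀, U₁, …, U_{n-1}`. -/
def TLBsub (ε : Kq) (n : ℕ) : Subalgebra Kq (TLB ε) :=
  Algebra.adjoin Kq ({s0 ε} ∪ {x | ∃ i, 1 ≤ i ∧ i ≤ n - 1 ∧ x = UU ε i})

/-- The type `D` generators: `UD 0 = U₀ = s₀U₁s₀` and `UD i = U_i` for `i ≥ 1`. -/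
def UD (ε : Kq) (i : ℕ) : TLB ε :=
  if i = 0 then s0 ε * UU ε 1 * s0 ε else UU ε i

/-- The subalgebra `TL(D_n)_ε ⊆ TL(B)_ε`, generated by `U₀, U₁, …, U_{n-1}`. -/
def TLDsub (ε : Kq) (n : ℕ) : Subalgebra Kq (TLB ε) :=
  Algebra.adjoin Kq {x | ∃ i ≤ n - 1, x = UD ε i}

/-- The type `B_n` Jones–Wenzl projectors `b_{n,η,ε}` (for `η = ±1`), defined by
`b_{1,η,ε} = (1 + η s₀)/2` and the recursion
`b_{n+1,η,ε} = b_{n,η,ε} + ε (q^{n-1}+q^{-(n-1)})/(q^n+q^{-n}) · b_{n,η,ε} U_n b_{n,η,ε}`. -/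
def bB (ε η : Kq) : ℕ → TLB ε
  | 0 => 1
  | 1 => (2 : Kq)⁻¹ • (1 + η • s0 ε)
  | (n+2) =>
      bB ε η (n+1) +
        (ε * (qq ^ n + qq⁻¹ ^ n) / (qq ^ (n+1) + qq⁻¹ ^ (n+1))) •
          (bB ε η (n+1) * UU ε (n+1) * bB ε η (n+1))

/-- The type `D_n` Jones–Wenzl projector `d_{n,ε} = b_{n,+,ε} + b_{n,-,ε}`. -/
def dD (ε : Kq) (n : ℕ) : TLB ε := bB ε 1 n + bB ε (-1) n

/-!
Everything is governed by the character `χ : TL(B)_ε → ℂ(q)`, `s₀ ↦ η`, `U_i ↦ 0` (it exists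
because `η² = 1`). The conditions on `x` say exactly that `TL(B_n)_ε` acts on `x` from both
sides through `χ`. For two such elements `x, b` of `TL(B_n)_ε` with `χ b = 1` this gives
`x = x b = χ(x) b`, and idempotency of `x ≠ 0` forces `χ(x) = 1`.

For existence, a joint induction shows that `b_{n+1}` has this property and satisfies
`U_{n+1} b_{n+1} U_{n+1} = T_n b_n U_{n+1}` with `T_n = -ε (q^{n+1}+q^{-n-1})/(q^n+q^{-n})`.
Since `ε² = 1`, the coefficient `c_n` of the recursion is `-1/T_n`, which is exactly what makes
`U_{n+1}` annihilate `b_{n+2}` on both sides; the braid relation `U_{n+2} U_{n+1} U_{n+2} = U_{n+2}`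
gives `T_{n+1} = -ε(q+q⁻¹) + c_n`. Idempotency and non-vanishing of `b_n` follow from `χ(b_n) = 1`.
-/

section Weight

variable {R A : Type*} [CommRing R] [Ring A] [Algebra R A]

def IsWeightElem (φ : A →ₐ[R] R) (B : Subalgebra R A) (x : A) : Prop :=
  ∀ y ∈ B, y * x = φ y • x ∧ x * y = φ y • x

variable {φ : A →ₐ[R] R} {B : Subalgebra R A} {x b : A}

theorem isWeightElem_adjoin {S : Set A} (h : ∀ s ∈ S, s * x = φ s • x ∧ x * s = φ s • x) :
    IsWeightElem φ (Algebra.adjoin R S) x := by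
  intro y hy
  induction hy using Algebra.adjoin_induction with
  | mem s hs => exact h s hs
  | algebraMap r =>
    simp only [AlgHom.commutes, Algebra.algebraMap_self_apply, Algebra.smul_def,
      Algebra.commutes, and_self]
  | add y z _ _ hy hz =>
    simp only [add_mul, mul_add, map_add, add_smul, hy.1, hy.2, hz.1, hz.2, and_self]
  | mul y z _ _ hy hz =>
    constructor
    · rw [mul_assoc, hz.1, mul_smul_comm, hy.1, smul_smul, map_mul, mul_comm]
    · rw [← mul_assoc, hy.2, smul_mul_assoc, hz.2, smul_smul, map_mul]

theorem IsWeightElem.isIdempotentElem (hx : IsWeightElem φ B x) (hxB : x ∈ B) (h1 : φ x = 1) :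
    IsIdempotentElem x :=
  (hx x hxB).1.trans (by rw [h1, one_smul])

theorem IsWeightElem.eq_of_isIdempotentElem [IsDomain R] (hx : IsWeightElem φ B x)
    (hb : IsWeightElem φ B b) (hxB : x ∈ B) (hbB : b ∈ B) (h1 : φ b = 1) (hx0 : x ≠ 0)
    (hxx : IsIdempotentElem x) : x = b := by
  have hxb : x = φ x • b := by rw [← (hb x hxB).1, (hx b hbB).2, h1, one_smul]
  have hφx : φ x = 1 := by
    refine (IsIdempotentElem.iff_eq_zero_or_one.1 (hxx.map φ)).resolve_left fun h0 => hx0 ?_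
    rw [hxb, h0, zero_smul]
  rw [hxb, hφx, one_smul]

end Weight

section JonesWenzlStep

variable {R A : Type*} [CommRing R] [Ring A] [Algebra R A] {b e u v : A} {C τ α : R}

theorem IsWeightElem.add_smul_mul_mul {φ : A →ₐ[R] R} {B : Subalgebra R A}
    (hb : IsWeightElem φ B b) (C : R) (u : A) : IsWeightElem φ B (b + C • (b * u * b)) := by
  intro y hy
  obtain ⟨hl, hr⟩ := hb y hy
  constructor
  · rw [mul_add, mul_smul_comm, ← mul_assoc, ← mul_assoc, hl, smul_mul_assoc, smul_mul_assoc,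
      smul_add, smul_comm]
  · rw [add_mul, smul_mul_assoc, mul_assoc, mul_assoc, hr, mul_smul_comm, mul_smul_comm,
      ← mul_assoc, smul_add, smul_comm]

theorem add_smul_mul_mul_annihilated (hC : C * τ = -1) (heb : e * b = b) (hbe : b * e = b)
    (hue : u * e = e * u) (hubu : u * b * u = τ • (e * u)) :
    u * (b + C • (b * u * b)) = 0 ∧ (b + C • (b * u * b)) * u = 0 := by
  have hl : u * (b * u * b) = τ • (u * b) := by
    rw [← mul_assoc, ← mul_assoc, hubu, smul_mul_assoc, ← hue, mul_assoc, heb]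
  have hr : b * u * b * u = τ • (b * u) := by
    rw [mul_assoc, mul_assoc, ← mul_assoc u, hubu, mul_smul_comm, ← mul_assoc, hbe]
  constructor
  · rw [mul_add, mul_smul_comm, hl, smul_smul, hC, neg_one_smul, add_neg_cancel]
  · rw [add_mul, smul_mul_assoc, hr, smul_smul, hC, neg_one_smul, add_neg_cancel]

theorem mul_add_smul_mul_mul_mul (hb : IsIdempotentElem b) (hvb : v * b = b * v)
    (hvv : v * v = α • v) (hvuv : v * u * v = v) :
    v * (b + C • (b * u * b)) * v = (α + C) • (b * v) := by
  have hbvb : v * b * v = α • (b * v) := by rw [hvb, mul_assoc, hvv, mul_smul_comm]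
  have hbubv : v * (b * u * b) * v = b * v := by
    calc v * (b * u * b) * v = b * (v * u * v) * b := by
          simp only [mul_assoc]; rw [← hvb, ← mul_assoc v b, hvb, mul_assoc]
      _ = b * v := by rw [hvuv, mul_assoc, hvb, ← mul_assoc, hb.eq]
  rw [mul_add, add_mul, mul_smul_comm, smul_mul_assoc, hbvb, hbubv, add_smul]

end JonesWenzlStep

section Coefficients

theorem qq_ne_zero : qq ≠ 0 := RatFunc.X_ne_zero

theorem qq_pow_add_inv_pow_ne_zero (k : ℕ) : qq ^ k + qq⁻¹ ^ k ≠ 0 := by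
  intro h
  have hX : algebraMap (Polynomial ℂ) Kq (Polynomial.X ^ (2 * k) + 1) = 0 := by
    rw [map_add, map_pow, map_one, RatFunc.algebraMap_X, ← qq,
      show qq ^ (2 * k) + 1 = qq ^ k * (qq ^ k + qq⁻¹ ^ k) by
        rw [mul_add, ← pow_add, ← mul_pow, mul_inv_cancel₀ qq_ne_zero, one_pow, two_mul],
      h, mul_zero]
  have := congrArg (Polynomial.eval 1)
    ((map_eq_zero_iff _ (IsFractionRing.injective (Polynomial ℂ) Kq)).1 hX)
  norm_num at this

def jwCoeff (ε : Kq) (n : ℕ) : Kq :=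
  ε * (qq ^ n + qq⁻¹ ^ n) / (qq ^ (n + 1) + qq⁻¹ ^ (n + 1))

def sandwichCoeff (ε : Kq) (n : ℕ) : Kq :=
  -(ε * (qq ^ (n + 1) + qq⁻¹ ^ (n + 1)) / (qq ^ n + qq⁻¹ ^ n))

theorem sandwichCoeff_zero (ε : Kq) : sandwichCoeff ε 0 = (2 : Kq)⁻¹ * -(ε * (qq + qq⁻¹)) := by
  rw [sandwichCoeff]; ring

theorem sandwichCoeff_succ (ε : Kq) (n : ℕ) :
    sandwichCoeff ε (n + 1) = -(ε * (qq + qq⁻¹)) + jwCoeff ε n := by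
  have hrec : qq ^ (n + 2) + qq⁻¹ ^ (n + 2)
      = (qq + qq⁻¹) * (qq ^ (n + 1) + qq⁻¹ ^ (n + 1)) - (qq ^ n + qq⁻¹ ^ n) := by
    linear_combination (-(qq ^ n + qq⁻¹ ^ n)) * mul_inv_cancel₀ qq_ne_zero
  have hB := qq_pow_add_inv_pow_ne_zero (n + 1)
  rw [sandwichCoeff, jwCoeff, hrec]
  generalize qq ^ (n + 1) + qq⁻¹ ^ (n + 1) = B at hB ⊢
  field_simp
  ring

theorem jwCoeff_mul_sandwichCoeff {ε : Kq} (hε : ε * ε = 1) (n : ℕ) :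
    jwCoeff ε n * sandwichCoeff ε n = -1 := by
  have hA := qq_pow_add_inv_pow_ne_zero n
  have hB := qq_pow_add_inv_pow_ne_zero (n + 1)
  rw [jwCoeff, sandwichCoeff]
  generalize qq ^ n + qq⁻¹ ^ n = A at hA ⊢
  generalize qq ^ (n + 1) + qq⁻¹ ^ (n + 1) = B at hB ⊢
  field_simp
  linear_combination -hε

end Coefficients

section Relations

variable (ε : Kq)

theorem UU_succ_mul_self (i : ℕ) :
    UU ε (i + 1) * UU ε (i + 1) = (-(ε * (qq + qq⁻¹))) • UU ε (i + 1) := by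
  have h := RingQuot.mkAlgHom_rel Kq (TLBRel.Usq (ε := ε) i)
  simp only [map_mul, map_smul] at h
  exact h

theorem UU_succ_mul_comm {i j : ℕ} (h : i + 2 ≤ j) :
    UU ε (i + 1) * UU ε (j + 1) = UU ε (j + 1) * UU ε (i + 1) := by
  have h := RingQuot.mkAlgHom_rel Kq (TLBRel.Ucomm (ε := ε) i j h)
  simp only [map_mul] at h
  exact h

theorem UU_succ_succ_mul_UU_succ_mul_UU_succ_succ (i : ℕ) :
    UU ε (i + 2) * UU ε (i + 1) * UU ε (i + 2) = UU ε (i + 2) := by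
  have h := RingQuot.mkAlgHom_rel Kq (TLBRel.Ubraid2 (ε := ε) i)
  simp only [map_mul] at h
  exact h

theorem s0_mul_s0 : s0 ε * s0 ε = 1 := by
  have h := RingQuot.mkAlgHom_rel Kq (TLBRel.s0sq (ε := ε))
  simp only [map_mul, map_one] at h
  exact h

theorem UU_one_mul_s0_mul_UU_one : UU ε 1 * s0 ε * UU ε 1 = 0 := by
  have h := RingQuot.mkAlgHom_rel Kq (TLBRel.UsU (ε := ε))
  simp only [map_mul, map_zero] at h
  exact h

theorem s0_mul_UU_comm {i : ℕ} (h : 2 ≤ i) : s0 ε * UU ε i = UU ε i * s0 ε := by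
  obtain ⟨j, rfl⟩ : ∃ j, i = j + 2 := ⟨i - 2, by omega⟩
  have h := RingQuot.mkAlgHom_rel Kq (TLBRel.scomm (ε := ε) (j + 1) (by omega))
  simp only [map_mul] at h
  exact h

end Relations

section Character

variable (ε η : Kq) (hη : η * η = 1)

def tlbChar : TLB ε →ₐ[Kq] Kq :=
  RingQuot.liftAlgHom Kq ⟨FreeAlgebra.lift Kq fun o => o.elim η fun _ => 0, by
    rintro _ _ ⟨⟩ <;> simp [g, hη]⟩

@[simp]
theorem tlbChar_s0 : tlbChar ε η hη (s0 ε) = η := by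
  rw [tlbChar, s0, RingQuot.liftAlgHom_mkAlgHom_apply, g, FreeAlgebra.lift_ι_apply]
  rfl

@[simp]
theorem tlbChar_UU (i : ℕ) : tlbChar ε η hη (UU ε i) = 0 := by
  rw [tlbChar, UU, RingQuot.liftAlgHom_mkAlgHom_apply, g, FreeAlgebra.lift_ι_apply]
  rfl

end Character

section TLBsub

variable {ε : Kq}

theorem s0_mem_TLBsub (n : ℕ) : s0 ε ∈ TLBsub ε n :=
  Algebra.subset_adjoin (Or.inl rfl)

theorem UU_mem_TLBsub {n i : ℕ} (h1 : 1 ≤ i) (h2 : i ≤ n - 1) : UU ε i ∈ TLBsub ε n :=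
  Algebra.subset_adjoin (Or.inr ⟨i, h1, h2, rfl⟩)

theorem TLBsub_mono {m n : ℕ} (h : m ≤ n) : TLBsub ε m ≤ TLBsub ε n := by
  refine Algebra.adjoin_mono ?_
  rintro x (hx | ⟨i, h1, h2, rfl⟩)
  · exact Or.inl hx
  · exact Or.inr ⟨i, h1, by omega, rfl⟩

theorem TLBsub_le_centralizer {n m : ℕ} (hn : 1 ≤ n) (hm : n + 1 ≤ m) :
    TLBsub ε n ≤ Subalgebra.centralizer Kq {UU ε m} := by
  refine Algebra.adjoin_le ?_
  rintro x (rfl | ⟨i, h1, h2, rfl⟩) _ rfl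
  · exact (s0_mul_UU_comm ε (by omega)).symm
  · obtain ⟨i, rfl⟩ := Nat.exists_eq_add_of_le' h1
    obtain ⟨j, rfl⟩ := Nat.exists_eq_add_of_le' (show 1 ≤ m by omega)
    exact (UU_succ_mul_comm ε (by omega)).symm

variable {η : Kq} {x : TLB ε} (hη : η * η = 1)

theorem isWeightElem_TLBsub_iff {n : ℕ} :
    IsWeightElem (tlbChar ε η hη) (TLBsub ε n) x ↔
      (s0 ε * x = η • x ∧ x * s0 ε = η • x) ∧
        ∀ i, 1 ≤ i → i ≤ n - 1 → UU ε i * x = 0 ∧ x * UU ε i = 0 := by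
  constructor
  · intro hx
    refine ⟨by simpa using hx _ (s0_mem_TLBsub n), fun i h1 h2 => ?_⟩
    simpa using hx _ (UU_mem_TLBsub h1 h2)
  · rintro ⟨hs, hU⟩
    refine isWeightElem_adjoin ?_
    rintro y (rfl | ⟨i, h1, h2, rfl⟩)
    · simpa using hs
    · simpa using hU i h1 h2

end TLBsub

section Projector

variable {ε η : Kq}

theorem bB_zero : bB ε η 0 = 1 := rfl

theorem bB_one : bB ε η 1 = (2 : Kq)⁻¹ • (1 + η • s0 ε) := rfl

theorem bB_succ_succ (n : ℕ) :
    bB ε η (n + 2) =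
      bB ε η (n + 1) + jwCoeff ε n • (bB ε η (n + 1) * UU ε (n + 1) * bB ε η (n + 1)) :=
  rfl

theorem bB_mem_TLBsub : ∀ n, bB ε η n ∈ TLBsub ε n
  | 0 => one_mem _
  | 1 => Subalgebra.smul_mem _ (add_mem (one_mem _) (Subalgebra.smul_mem _ (s0_mem_TLBsub 1) _)) _
  | n + 2 => by
    have hb := TLBsub_mono (Nat.le_succ _) (bB_mem_TLBsub (n + 1))
    rw [bB_succ_succ]
    exact add_mem hb (Subalgebra.smul_mem _
      (mul_mem (mul_mem hb (UU_mem_TLBsub (n := n + 2) (by omega) (by omega))) hb) _)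

theorem tlbChar_bB (hη : η * η = 1) : ∀ n, tlbChar ε η hη (bB ε η n) = 1
  | 0 => by rw [bB_zero, map_one]
  | 1 => by
    rw [bB_one, map_smul, map_add, map_one, map_smul, tlbChar_s0, smul_eq_mul, smul_eq_mul, hη,
      one_add_one_eq_two, inv_mul_cancel₀ two_ne_zero]
  | n + 2 => by
    rw [bB_succ_succ, map_add, map_smul, map_mul, map_mul, tlbChar_UU, mul_zero, zero_mul,
      smul_zero, add_zero, tlbChar_bB hη (n + 1)]

theorem UU_mul_bB_comm {n m : ℕ} (h : n + 1 ≤ m) : UU ε m * bB ε η n = bB ε η n * UU ε m := by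
  rcases Nat.eq_zero_or_pos n with rfl | hn
  · rw [bB_zero, one_mul, mul_one]
  · exact TLBsub_le_centralizer hn h (bB_mem_TLBsub n) _ rfl

end Projector

section Existence

variable {ε η : Kq}

theorem isWeightElem_bB_one (hη : η * η = 1) :
    IsWeightElem (tlbChar ε η hη) (TLBsub ε 1) (bB ε η 1) := by
  have hL : s0 ε * (1 + η • s0 ε) = η • (1 + η • s0 ε) := by
    rw [mul_add, mul_one, mul_smul_comm, s0_mul_s0, smul_add, smul_smul, hη, one_smul, add_comm]
  have hR : (1 + η • s0 ε) * s0 ε = η • (1 + η • s0 ε) := by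
    rw [add_mul, one_mul, smul_mul_assoc, s0_mul_s0, smul_add, smul_smul, hη, one_smul, add_comm]
  refine (isWeightElem_TLBsub_iff hη).2 ⟨⟨?_, ?_⟩, fun i h1 h2 => absurd h2 (by omega)⟩
  · rw [bB_one, mul_smul_comm, hL, smul_comm]
  · rw [bB_one, smul_mul_assoc, hR, smul_comm]

theorem UU_one_mul_bB_one_mul_UU_one :
    UU ε 1 * bB ε η 1 * UU ε 1 = sandwichCoeff ε 0 • (bB ε η 0 * UU ε 1) := by
  have hUU : UU ε 1 * UU ε 1 = (-(ε * (qq + qq⁻¹))) • UU ε 1 := UU_succ_mul_self ε 0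
  have hUsU := UU_one_mul_s0_mul_UU_one ε
  simp only [bB_one, mul_add, add_mul, mul_smul_comm, smul_mul_assoc, mul_one, one_mul, hUU,
    hUsU, smul_zero, add_zero, smul_smul, sandwichCoeff_zero, bB_zero]

theorem isWeightElem_bB_and_sandwich (hε : ε * ε = 1) (hη : η * η = 1) : ∀ n,
    IsWeightElem (tlbChar ε η hη) (TLBsub ε (n + 1)) (bB ε η (n + 1)) ∧
      UU ε (n + 1) * bB ε η (n + 1) * UU ε (n + 1) = sandwichCoeff ε n • (bB ε η n * UU ε (n + 1))
  | 0 => ⟨isWeightElem_bB_one hη, UU_one_mul_bB_one_mul_UU_one⟩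
  | n + 1 => by
    obtain ⟨hw, hsand⟩ := isWeightElem_bB_and_sandwich hε hη n
    have habs : bB ε η n * bB ε η (n + 1) = bB ε η (n + 1) ∧
        bB ε η (n + 1) * bB ε η n = bB ε η (n + 1) := by
      simpa [tlbChar_bB] using hw (bB ε η n) (TLBsub_mono (Nat.le_succ n) (bB_mem_TLBsub n))
    have hUann := add_smul_mul_mul_annihilated (jwCoeff_mul_sandwichCoeff hε n) habs.1 habs.2
      (UU_mul_bB_comm le_rfl) hsand
    obtain ⟨hs, hU⟩ :=
      (isWeightElem_TLBsub_iff hη).1 (hw.add_smul_mul_mul (jwCoeff ε n) (UU ε (n + 1)))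
    rw [bB_succ_succ]
    refine ⟨(isWeightElem_TLBsub_iff hη).2 ⟨hs, fun i h1 h2 => ?_⟩, ?_⟩
    · rcases (show i ≤ n ∨ i = n + 1 by omega) with h | rfl
      · exact hU i h1 (by omega)
      · exact hUann
    · rw [sandwichCoeff_succ]
      exact mul_add_smul_mul_mul_mul (hw.isIdempotentElem (bB_mem_TLBsub _) (tlbChar_bB hη _))
        (UU_mul_bB_comm le_rfl) (UU_succ_mul_self ε (n + 1))
        (UU_succ_succ_mul_UU_succ_mul_UU_succ_succ ε n)

theorem isWeightElem_bB (hε : ε * ε = 1) (hη : η * η = 1) {n : ℕ} (hn : 1 ≤ n) :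
    IsWeightElem (tlbChar ε η hη) (TLBsub ε n) (bB ε η n) := by
  obtain ⟨m, rfl⟩ := Nat.exists_eq_add_of_le' hn
  exact (isWeightElem_bB_and_sandwich hε hη m).1

end Existence

theorem stmt11 (ε η : Kq) (hε : ε = 1 ∨ ε = -1) (hη : η = 1 ∨ η = -1)
    (n : ℕ) (hn : 1 ≤ n) :
    (bB ε η n ∈ TLBsub ε n ∧ bB ε η n ≠ 0 ∧ IsIdempotentElem (bB ε η n) ∧
      s0 ε * bB ε η n = η • bB ε η n ∧ bB ε η n * s0 ε = η • bB ε η n ∧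
      ∀ i : ℕ, 1 ≤ i → i ≤ n - 1 →
        UU ε i * bB ε η n = 0 ∧ bB ε η n * UU ε i = 0) ∧
    ∀ x ∈ TLBsub ε n, x ≠ 0 → IsIdempotentElem x →
      s0 ε * x = η • x → x * s0 ε = η • x →
      (∀ i : ℕ, 1 ≤ i → i ≤ n - 1 → UU ε i * x = 0 ∧ x * UU ε i = 0) →
      x = bB ε η n := by
  have hε2 : ε * ε = 1 := by rcases hε with rfl | rfl <;> norm_num
  have hη2 : η * η = 1 := by rcases hη with rfl | rfl <;> norm_num
  have hw := isWeightElem_bB hε2 hη2 hn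
  have hmem := bB_mem_TLBsub (ε := ε) (η := η) n
  have hchar := tlbChar_bB (ε := ε) hη2 n
  obtain ⟨⟨hsL, hsR⟩, hU⟩ := (isWeightElem_TLBsub_iff hη2).1 hw
  refine ⟨⟨hmem, fun h0 => by simp [h0] at hchar, hw.isIdempotentElem hmem hchar, hsL, hsR, hU⟩,
    fun x hx hx0 hxx hxsL hxsR hxU => ?_⟩
  exact ((isWeightElem_TLBsub_iff hη2).2 ⟨⟨hxsL, hxsR⟩, hxU⟩).eq_of_isIdempotentElem hw hx hmem
    hchar hx0 hxx

end
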